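/- arXiv:1510.08992 — 8 statements merged into one kernel-verified Lean document; each statement's English description precedes it below -/
import Mathlib

section
/- Let ω : ℝ → ℝ be a continuous function, and let ρ, q : ℝ → ℝ be twice differentiable functions with ρ(t) ≠ 0 for all t, such that ρ satisfies ρ''(t) + ω(t)²·ρ(t) = 1/ρ(t)³ for all t and q satisfies q''(t) + ω(t)²·q(t) = 0 for all t. Then the Ermakov–Lewis invariant I(t) = (1/2)·((ρ(t)·q'(t) − ρ'(t)·q(t))² + (q(t)/ρ(t))²) is constant, i.e. I(t) = I(0) for all t. -/
/-!
Write `W = ρ q' − ρ' q`. Then `W' = ρ q'' − ρ'' q` and `(q/ρ)' = W/ρ²`, so the invariant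
`I = (W² + (q/ρ)²)/2` has `I' = W (ρ q'' − ρ'' q + q/ρ³)`. Substituting the two equations of
motion, the `ω²` terms cancel in `ρ q'' − ρ'' q = −q/ρ³`, so `I' = 0` and `I` is constant.
-/

section

variable {𝕜 : Type*} [NontriviallyNormedField 𝕜] {f g : 𝕜 → 𝕜} {x : 𝕜}

theorem hasDerivAt_mul_deriv_sub_deriv_mul (hf : DifferentiableAt 𝕜 f x)
    (hf' : DifferentiableAt 𝕜 (deriv f) x) (hg : DifferentiableAt 𝕜 g x)
    (hg' : DifferentiableAt 𝕜 (deriv g) x) :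
    HasDerivAt (fun t => f t * deriv g t - deriv f t * g t)
      (f x * deriv (deriv g) x - deriv (deriv f) x * g x) x := by
  refine ((hf.hasDerivAt.mul hg'.hasDerivAt).sub (hf'.hasDerivAt.mul hg.hasDerivAt)).congr_deriv ?_
  ring

end

noncomputable def lewisInvariant (ρ q : ℝ → ℝ) (t : ℝ) : ℝ :=
  1 / 2 * ((ρ t * deriv q t - deriv ρ t * q t) ^ 2 + (q t / ρ t) ^ 2)

theorem hasDerivAt_lewisInvariant {ρ q : ℝ → ℝ} {x : ℝ} (hρ : DifferentiableAt ℝ ρ x)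
    (hρ' : DifferentiableAt ℝ (deriv ρ) x) (hq : DifferentiableAt ℝ q x)
    (hq' : DifferentiableAt ℝ (deriv q) x) (hρx : ρ x ≠ 0) :
    HasDerivAt (lewisInvariant ρ q)
      ((ρ x * deriv q x - deriv ρ x * q x) *
        (ρ x * deriv (deriv q) x - deriv (deriv ρ) x * q x + q x / ρ x ^ 3)) x := by
  have hW := hasDerivAt_mul_deriv_sub_deriv_mul hρ hρ' hq hq'
  have hQ := hq.hasDerivAt.div hρ.hasDerivAt hρx
  refine (((hW.pow 2).add (hQ.pow 2)).const_mul (1 / 2 : ℝ)).congr_deriv ?_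
  simp only [Pi.div_apply, Nat.add_one_sub_one, pow_one, Nat.cast_ofNat]
  field_simp

theorem ermakov_lewis_invariant_constant_general
    (ω : ℝ → ℝ) (ρ q : ℝ → ℝ)
    (hρ : Differentiable ℝ ρ) (hρ' : Differentiable ℝ (deriv ρ))
    (hq : Differentiable ℝ q) (hq' : Differentiable ℝ (deriv q))
    (hρne : ∀ t, ρ t ≠ 0)
    (hρeq : ∀ t, deriv (deriv ρ) t + (ω t) ^ 2 * ρ t = 1 / (ρ t) ^ 3)
    (hqeq : ∀ t, deriv (deriv q) t + (ω t) ^ 2 * q t = 0) :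
    ∀ t, (1 / 2) * ((ρ t * deriv q t - deriv ρ t * q t) ^ 2
          + (q t / ρ t) ^ 2)
        = (1 / 2) * ((ρ 0 * deriv q 0 - deriv ρ 0 * q 0) ^ 2
          + (q 0 / ρ 0) ^ 2) := by
  have hI : ∀ t, HasDerivAt (lewisInvariant ρ q) 0 t := fun t => by
    have hcancel : ρ t * deriv (deriv q) t - deriv (deriv ρ) t * q t + q t / ρ t ^ 3 = 0 := by
      rw [eq_sub_of_add_eq (hqeq t), eq_sub_of_add_eq (hρeq t)]
      ring
    simpa only [hcancel, mul_zero] using hasDerivAt_lewisInvariant (hρ t) (hρ' t) (hq t) (hq' t) (hρne t)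
  exact fun t => is_const_of_deriv_eq_zero (fun s => (hI s).differentiableAt)
    (fun s => (hI s).deriv) t 0

/-- The Ermakov–Lewis invariant: for `ρ` solving the time-dependent auxiliary
equation `ρ'' + ω(t)² ρ = 1/ρ³` and `q` solving `q'' + ω(t)² q = 0`, the
quantity `I = (1/2)((ρ q' − ρ' q)² + (q/ρ)²)` is constant. -/
theorem ermakov_lewis_invariant_constant
    (ω : ℝ → ℝ) (hω : Continuous ω) (ρ q : ℝ → ℝ)
    (hρ : Differentiable ℝ ρ) (hρ' : Differentiable ℝ (deriv ρ))
    (hq : Differentiable ℝ q) (hq' : Differentiable ℝ (deriv q))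
    (hρne : ∀ t, ρ t ≠ 0)
    (hρeq : ∀ t, deriv (deriv ρ) t + (ω t) ^ 2 * ρ t = 1 / (ρ t) ^ 3)
    (hqeq : ∀ t, deriv (deriv q) t + (ω t) ^ 2 * q t = 0) :
    ∀ t, (1 / 2) * ((ρ t * deriv q t - deriv ρ t * q t) ^ 2
          + (q t / ρ t) ^ 2)
        = (1 / 2) * ((ρ 0 * deriv q 0 - deriv ρ 0 * q 0) ^ 2
          + (q 0 / ρ 0) ^ 2) :=
  ermakov_lewis_invariant_constant_general ω ρ q hρ hρ' hq hq' hρne hρeq hqeq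
end

section
/- Let ω, h ∈ ℝ, and let u, v : ℝ → ℝ be twice differentiable functions satisfying u''(t) + ω²·u(t) = 0 and v''(t) + ω²·v(t) = 0 for all t. Let W = u(0)·v'(0) − u'(0)·v(0) and suppose W ≠ 0. Let A, B, C be real constants with (A·C − B²)·W² = h², and suppose w(t) := A·u(t)² + 2B·u(t)·v(t) + C·v(t)² > 0 for all t. Then x(t) := √(w(t)) satisfies the Ermakov–Pinney equation x''(t) + ω²·x(t) = h²/x(t)³ for all t. -/
/-!
Write `w = b(X, X)` for the symmetric bilinear form `b` of `A a² + 2B ab + C b²` and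
`X = (u, v)`. Then `w' = 2 b(X, X')` and, since `X'' = -ω² X`, `b(X, X')' = b(X', X') - ω² w`.
For `x = √w` this gives `x'' + ω² x = (b(X, X) b(X', X') - b(X, X')²) / x³`, and the numerator
equals `(AC - B²)` times the square of the Wronskian `u v' - u' v`, which is constant.
-/

open Real

section Oscillator

variable {q u v : ℝ → ℝ}

theorem hasDerivAt_deriv_of_ode (hu' : Differentiable ℝ (deriv u))
    (hueq : ∀ t, deriv (deriv u) t + q t * u t = 0) (t : ℝ) :
    HasDerivAt (deriv u) (-(q t * u t)) t := by
  rw [← eq_neg_of_add_eq_zero_left (hueq t)]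
  exact (hu' t).hasDerivAt

theorem wronskian_eq_wronskian_zero (hu : Differentiable ℝ u) (hu' : Differentiable ℝ (deriv u))
    (hv : Differentiable ℝ v) (hv' : Differentiable ℝ (deriv v))
    (hueq : ∀ t, deriv (deriv u) t + q t * u t = 0)
    (hveq : ∀ t, deriv (deriv v) t + q t * v t = 0) (t : ℝ) :
    u t * deriv v t - deriv u t * v t = u 0 * deriv v 0 - deriv u 0 * v 0 := by
  have hderiv : ∀ s, HasDerivAt (fun y => u y * deriv v y - deriv u y * v y) 0 s := fun s => by
    refine (((hu s).hasDerivAt.mul (hasDerivAt_deriv_of_ode hv' hveq s)).sub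
      ((hasDerivAt_deriv_of_ode hu' hueq s).mul (hv s).hasDerivAt)).congr_deriv ?_
    ring
  exact is_const_of_deriv_eq_zero (fun s => (hderiv s).differentiableAt)
    (fun s => (hderiv s).deriv) t 0

end Oscillator

def binaryPolarForm (A B C a b a' b' : ℝ) : ℝ :=
  A * a * a' + B * (a * b' + a' * b) + C * b * b'

theorem binaryPolarForm_comm (A B C a b a' b' : ℝ) :
    binaryPolarForm A B C a b a' b' = binaryPolarForm A B C a' b' a b := by
  unfold binaryPolarForm; ring

theorem binaryPolarForm_mul_sub_sq (A B C a b a' b' : ℝ) :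
    binaryPolarForm A B C a b a b * binaryPolarForm A B C a' b' a' b'
      - binaryPolarForm A B C a b a' b' ^ 2 = (A * C - B ^ 2) * (a * b' - a' * b) ^ 2 := by
  unfold binaryPolarForm; ring

theorem HasDerivAt.binaryPolarForm (A B C : ℝ) {a b a' b' : ℝ → ℝ} {da db da' db' t : ℝ}
    (ha : HasDerivAt a da t) (hb : HasDerivAt b db t)
    (ha' : HasDerivAt a' da' t) (hb' : HasDerivAt b' db' t) :
    HasDerivAt (fun s => binaryPolarForm A B C (a s) (b s) (a' s) (b' s))
      (binaryPolarForm A B C da db (a' t) (b' t) + binaryPolarForm A B C (a t) (b t) da' db') t := by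
  unfold _root_.binaryPolarForm
  refine ((((ha.const_mul A).mul ha').add
    (((ha.mul hb').add (ha'.mul hb)).const_mul B)).add ((hb.const_mul C).mul hb')).congr_deriv ?_
  ring

theorem deriv_deriv_sqrt {w p : ℝ → ℝ} {dp t : ℝ} (hw : ∀ s, 0 < w s)
    (hwd : ∀ s, HasDerivAt w (2 * p s) s) (hpd : HasDerivAt p dp t) :
    deriv (deriv fun s => √(w s)) t = (w t * dp - p t ^ 2) / √(w t) ^ 3 := by
  have hsqrtd : ∀ s, HasDerivAt (fun y => √(w y)) (p s / √(w s)) s := fun s => by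
    convert (hwd s).sqrt (hw s).ne' using 1
    field_simp
  have hsqrt_pos : 0 < √(w t) := sqrt_pos.mpr (hw t)
  have hsq : √(w t) ^ 2 = w t := sq_sqrt (hw t).le
  rw [funext fun s => (hsqrtd s).deriv]
  refine (hpd.div (hsqrtd t) hsqrt_pos.ne').deriv.trans ?_
  field_simp
  linear_combination dp * hsq

theorem pinney_solution_general
    (ω h : ℝ) (u v : ℝ → ℝ)
    (hu : Differentiable ℝ u) (hu' : Differentiable ℝ (deriv u))
    (hv : Differentiable ℝ v) (hv' : Differentiable ℝ (deriv v))
    (hueq : ∀ t, deriv (deriv u) t + ω ^ 2 * u t = 0)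
    (hveq : ∀ t, deriv (deriv v) t + ω ^ 2 * v t = 0)
    (W : ℝ) (hW : W = u 0 * deriv v 0 - deriv u 0 * v 0)
    (A B C : ℝ) (hABC : (A * C - B ^ 2) * W ^ 2 = h ^ 2)
    (hwpos : ∀ t, A * u t ^ 2 + 2 * B * u t * v t + C * v t ^ 2 > 0) :
    ∀ t, deriv (deriv fun s => Real.sqrt (A * u s ^ 2 + 2 * B * u s * v s + C * v s ^ 2)) t
          + ω ^ 2 * Real.sqrt (A * u t ^ 2 + 2 * B * u t * v t + C * v t ^ 2)
        = h ^ 2 / (Real.sqrt (A * u t ^ 2 + 2 * B * u t * v t + C * v t ^ 2)) ^ 3 := by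
  intro t
  set P := binaryPolarForm A B C
  have hw_eq : ∀ s, A * u s ^ 2 + 2 * B * u s * v s + C * v s ^ 2 = P (u s) (v s) (u s) (v s) :=
    fun s => by simp only [P, binaryPolarForm]; ring
  simp only [hw_eq] at hwpos ⊢
  have hud s := (hu s).hasDerivAt
  have hvd s := (hv s).hasDerivAt
  have hwd s : HasDerivAt (fun y => P (u y) (v y) (u y) (v y))
      (2 * P (u s) (v s) (deriv u s) (deriv v s)) s := by
    convert (hud s).binaryPolarForm A B C (hvd s) (hud s) (hvd s) using 1
    rw [binaryPolarForm_comm]; ring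
  have hpd : HasDerivAt (fun s => P (u s) (v s) (deriv u s) (deriv v s))
      (P (deriv u t) (deriv v t) (deriv u t) (deriv v t) - ω ^ 2 * P (u t) (v t) (u t) (v t)) t := by
    convert (hud t).binaryPolarForm A B C (hvd t)
      (hasDerivAt_deriv_of_ode (q := fun _ => ω ^ 2) hu' hueq t)
      (hasDerivAt_deriv_of_ode (q := fun _ => ω ^ 2) hv' hveq t) using 1
    simp only [P, binaryPolarForm]; ring
  have hnum : P (u t) (v t) (u t) (v t) * P (deriv u t) (deriv v t) (deriv u t) (deriv v t)
      - P (u t) (v t) (deriv u t) (deriv v t) ^ 2 = h ^ 2 := by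
    rw [binaryPolarForm_mul_sub_sq, wronskian_eq_wronskian_zero (q := fun _ => ω ^ 2)
      hu hu' hv hv' hueq hveq t, ← hW, hABC]
  have hsq : √(P (u t) (v t) (u t) (v t)) ^ 2 = P (u t) (v t) (u t) (v t) :=
    sq_sqrt (hwpos t).le
  rw [deriv_deriv_sqrt hwpos hwd hpd, ← hnum]
  have hsqrt_pos := sqrt_pos.mpr (hwpos t)
  field_simp
  linear_combination ω ^ 2 * (√(P (u t) (v t) (u t) (v t)) ^ 2 + P (u t) (v t) (u t) (v t)) * hsq

/-- Pinney's solution: if `u, v` solve `y'' + ω² y = 0` with nonzero Wronskian `W`,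
`(AC − B²)W² = h²`, and `w = Au² + 2Buv + Cv² > 0`, then `x = √w` solves the
Ermakov–Pinney equation `x'' + ω² x = h²/x³`. -/
theorem pinney_solution
    (ω h : ℝ) (u v : ℝ → ℝ)
    (hu : Differentiable ℝ u) (hu' : Differentiable ℝ (deriv u))
    (hv : Differentiable ℝ v) (hv' : Differentiable ℝ (deriv v))
    (hueq : ∀ t, deriv (deriv u) t + ω ^ 2 * u t = 0)
    (hveq : ∀ t, deriv (deriv v) t + ω ^ 2 * v t = 0)
    (W : ℝ) (hW : W = u 0 * deriv v 0 - deriv u 0 * v 0) (hWne : W ≠ 0)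
    (A B C : ℝ) (hABC : (A * C - B ^ 2) * W ^ 2 = h ^ 2)
    (hwpos : ∀ t, A * u t ^ 2 + 2 * B * u t * v t + C * v t ^ 2 > 0) :
    ∀ t, deriv (deriv fun s => Real.sqrt (A * u s ^ 2 + 2 * B * u s * v s + C * v s ^ 2)) t
          + ω ^ 2 * Real.sqrt (A * u t ^ 2 + 2 * B * u t * v t + C * v t ^ 2)
        = h ^ 2 / (Real.sqrt (A * u t ^ 2 + 2 * B * u t * v t + C * v t ^ 2)) ^ 3 :=
  pinney_solution_general ω h u v hu hu' hv hv' hueq hveq W hW A B C hABC hwpos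
end

section
/- Let a : ℝ → ℝ be continuous, h ∈ ℝ, and let u, v : ℝ → ℝ be twice differentiable functions satisfying u''(t) + a(t)·u(t) = 0 and v''(t) + a(t)·v(t) = 0 for all t. Let W = u(0)·v'(0) − u'(0)·v(0) and suppose W ≠ 0. Let A, B, C be real constants with (A·C − B²)·W² = h², and suppose w(t) := A·u(t)² + 2B·u(t)·v(t) + C·v(t)² > 0 for all t. Then x(t) := √(w(t)) satisfies x''(t) + a(t)·x(t) = h²/x(t)³ for all t. -/
/-!
Write `w = Q(u, v)` for the binary quadratic form `Q(x, y) = A x² + 2B x y + C y²` with polar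
form `P`. Then `w' = 2 P(u, v; u', v')` and, by the linear equation, `P(u, v; u', v')' =
Q(u', v') - a w`, so for `x = √w` one gets `x'' + a x = (w Q(u', v') - P(u, v; u', v')²) / x³`.
The numerator is `(AC - B²)(u v' - u' v)²` by a Lagrange-type identity, and the Wronskian
`u v' - u' v` of two solutions is constant, so the numerator is `(AC - B²) W² = h²`.
-/

namespace Pinney

def quadForm (A B C x y : ℝ) : ℝ := A * x ^ 2 + 2 * B * x * y + C * y ^ 2

def polarForm (A B C x y x' y' : ℝ) : ℝ := A * x * x' + B * (x * y' + x' * y) + C * y * y'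

variable {A B C : ℝ}

theorem polarForm_self (x y : ℝ) : polarForm A B C x y x y = quadForm A B C x y := by
  unfold polarForm quadForm; ring

theorem polarForm_mul_right_self (x y c : ℝ) :
    polarForm A B C x y (c * x) (c * y) = c * quadForm A B C x y := by
  unfold polarForm quadForm; ring

theorem quadForm_mul_quadForm_sub_polarForm_sq (x y x' y' : ℝ) :
    quadForm A B C x y * quadForm A B C x' y' - polarForm A B C x y x' y' ^ 2
      = (A * C - B ^ 2) * (x * y' - x' * y) ^ 2 := by
  unfold polarForm quadForm; ring

theorem hasDerivAt_polarForm {u v u₁ v₁ : ℝ → ℝ} {u' v' u₁' v₁' t : ℝ}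
    (hu : HasDerivAt u u' t) (hv : HasDerivAt v v' t)
    (hu₁ : HasDerivAt u₁ u₁' t) (hv₁ : HasDerivAt v₁ v₁' t) :
    HasDerivAt (fun s => polarForm A B C (u s) (v s) (u₁ s) (v₁ s))
      (polarForm A B C u' v' (u₁ t) (v₁ t) + polarForm A B C (u t) (v t) u₁' v₁') t := by
  have H := (((hu.const_mul A).mul hu₁).add
    (((hu.mul hv₁).add (hu₁.mul hv)).const_mul B)).add ((hv.const_mul C).mul hv₁)
  refine H.congr_deriv ?_
  unfold polarForm; ring

theorem hasDerivAt_quadForm {u v : ℝ → ℝ} {u' v' t : ℝ}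
    (hu : HasDerivAt u u' t) (hv : HasDerivAt v v' t) :
    HasDerivAt (fun s => quadForm A B C (u s) (v s))
      (2 * polarForm A B C (u t) (v t) u' v') t := by
  have H := hasDerivAt_polarForm (A := A) (B := B) (C := C) hu hv hu hv
  simp only [polarForm_self] at H
  refine H.congr_deriv ?_
  unfold polarForm; ring

theorem wronskian_eq_of_deriv_deriv_add_mul_eq_zero {a u v : ℝ → ℝ}
    (hu : Differentiable ℝ u) (hu' : Differentiable ℝ (deriv u))
    (hv : Differentiable ℝ v) (hv' : Differentiable ℝ (deriv v))
    (hueq : ∀ t, deriv (deriv u) t + a t * u t = 0)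
    (hveq : ∀ t, deriv (deriv v) t + a t * v t = 0) (s t : ℝ) :
    u t * deriv v t - deriv u t * v t = u s * deriv v s - deriv u s * v s := by
  refine is_const_of_deriv_eq_zero ((hu.mul hv').sub (hu'.mul hv)) (fun r => ?_) t s
  have H := (hu r).hasDerivAt.mul (hv' r).hasDerivAt |>.sub <|
    (hu' r).hasDerivAt.mul (hv r).hasDerivAt
  rw [H.deriv]
  linear_combination u r * hveq r - v r * hueq r

theorem deriv_deriv_sqrt {w d : ℝ → ℝ} {e t : ℝ} (hw : ∀ s, HasDerivAt w (2 * d s) s)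
    (hpos : ∀ s, 0 < w s) (hd : HasDerivAt d e t) :
    deriv (deriv fun s => √(w s)) t = (e * w t - d t ^ 2) / √(w t) ^ 3 := by
  have hsqrt_ne (s : ℝ) : √(w s) ≠ 0 := (Real.sqrt_pos.mpr (hpos s)).ne'
  have hx (s : ℝ) : HasDerivAt (fun r => √(w r)) (d s / √(w s)) s :=
    ((hw s).sqrt (hpos s).ne').congr_deriv (by field_simp)
  have hx' : HasDerivAt (fun s => d s / √(w s)) _ t := hd.div (hx t) (hsqrt_ne t)
  rw [funext fun s => (hx s).deriv, hx'.deriv]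
  have hsq : √(w t) ^ 2 = w t := Real.sq_sqrt (hpos t).le
  field_simp
  rw [hsq]

end Pinney

open Pinney

theorem pinney_solution_time_dependent_general
    (a : ℝ → ℝ) (h : ℝ) (u v : ℝ → ℝ)
    (hu : Differentiable ℝ u) (hu' : Differentiable ℝ (deriv u))
    (hv : Differentiable ℝ v) (hv' : Differentiable ℝ (deriv v))
    (hueq : ∀ t, deriv (deriv u) t + a t * u t = 0)
    (hveq : ∀ t, deriv (deriv v) t + a t * v t = 0)
    (W : ℝ) (hW : W = u 0 * deriv v 0 - deriv u 0 * v 0)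
    (A B C : ℝ) (hABC : (A * C - B ^ 2) * W ^ 2 = h ^ 2)
    (hwpos : ∀ t, A * u t ^ 2 + 2 * B * u t * v t + C * v t ^ 2 > 0) :
    ∀ t, deriv (deriv fun s => Real.sqrt (A * u s ^ 2 + 2 * B * u s * v s + C * v s ^ 2)) t
          + a t * Real.sqrt (A * u t ^ 2 + 2 * B * u t * v t + C * v t ^ 2)
        = h ^ 2 / (Real.sqrt (A * u t ^ 2 + 2 * B * u t * v t + C * v t ^ 2)) ^ 3 := by
  intro t
  change deriv (deriv fun s => √(quadForm A B C (u s) (v s))) t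
      + a t * √(quadForm A B C (u t) (v t)) = h ^ 2 / √(quadForm A B C (u t) (v t)) ^ 3
  have hw (s : ℝ) := hasDerivAt_quadForm (A := A) (B := B) (C := C)
    (hu s).hasDerivAt (hv s).hasDerivAt
  have hd := hasDerivAt_polarForm (A := A) (B := B) (C := C) (hu t).hasDerivAt
    (hv t).hasDerivAt (hu' t).hasDerivAt (hv' t).hasDerivAt
  have hu'' : deriv (deriv u) t = -a t * u t := by linear_combination hueq t
  have hv'' : deriv (deriv v) t = -a t * v t := by linear_combination hveq t
  rw [hu'', hv'', polarForm_mul_right_self, polarForm_self] at hd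
  have hnum := quadForm_mul_quadForm_sub_polarForm_sq (A := A) (B := B) (C := C)
    (u t) (v t) (deriv u t) (deriv v t)
  rw [wronskian_eq_of_deriv_deriv_add_mul_eq_zero hu hu' hv hv' hueq hveq 0 t, ← hW,
    hABC] at hnum
  rw [deriv_deriv_sqrt hw hwpos hd]
  set w := quadForm A B C (u t) (v t)
  have hsq : √w ^ 2 = w := Real.sq_sqrt (hwpos t).le
  have hsqrt_ne : √w ≠ 0 := (Real.sqrt_pos.mpr (hwpos t)).ne'
  field_simp
  linear_combination hnum + a t * (√w ^ 2 + w) * hsq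

/-- Pinney's solution: if `u, v` solve `z'' + a(t) z = 0` with nonzero Wronskian `W`,
`(AC − B²)W² = h²`, and `w = Au² + 2Buv + Cv² > 0`, then `x = √w` solves the
Ermakov–Pinney equation `x'' + a(t) x = h²/x³`. -/
theorem pinney_solution_time_dependent
    (a : ℝ → ℝ) (ha : Continuous a) (h : ℝ) (u v : ℝ → ℝ)
    (hu : Differentiable ℝ u) (hu' : Differentiable ℝ (deriv u))
    (hv : Differentiable ℝ v) (hv' : Differentiable ℝ (deriv v))
    (hueq : ∀ t, deriv (deriv u) t + a t * u t = 0)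
    (hveq : ∀ t, deriv (deriv v) t + a t * v t = 0)
    (W : ℝ) (hW : W = u 0 * deriv v 0 - deriv u 0 * v 0) (hWne : W ≠ 0)
    (A B C : ℝ) (hABC : (A * C - B ^ 2) * W ^ 2 = h ^ 2)
    (hwpos : ∀ t, A * u t ^ 2 + 2 * B * u t * v t + C * v t ^ 2 > 0) :
    ∀ t, deriv (deriv fun s => Real.sqrt (A * u s ^ 2 + 2 * B * u s * v s + C * v s ^ 2)) t
          + a t * Real.sqrt (A * u t ^ 2 + 2 * B * u t * v t + C * v t ^ 2)
        = h ^ 2 / (Real.sqrt (A * u t ^ 2 + 2 * B * u t * v t + C * v t ^ 2)) ^ 3 :=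
  pinney_solution_time_dependent_general a h u v hu hu' hv hv' hueq hveq W hW A B C hABC hwpos
end

section
/- Let a : ℝ → ℝ be a differentiable function and let w : ℝ → ℝ be three times differentiable, satisfying the third-order equation w'''(t) + 2·a(t)·w'(t) + a'(t)·w(t) = 0 for all t. Then the quantity t ↦ w(t)·w''(t) − (1/2)·w'(t)² + a(t)·w(t)² is constant. -/
noncomputable def firstIntegral (a w : ℝ → ℝ) (t : ℝ) : ℝ :=
  w t * deriv (deriv w) t - (1 / 2) * deriv w t ^ 2 + a t * w t ^ 2

theorem hasDerivAt_firstIntegral {a w : ℝ → ℝ} {t : ℝ} (ha : DifferentiableAt ℝ a t)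
    (hw : DifferentiableAt ℝ w t) (hw' : DifferentiableAt ℝ (deriv w) t)
    (hw'' : DifferentiableAt ℝ (deriv (deriv w)) t) :
    HasDerivAt (firstIntegral a w)
      (w t * (deriv (deriv (deriv w)) t + 2 * a t * deriv w t + deriv a t * w t)) t := by
  have h : HasDerivAt (firstIntegral a w) _ t := ((hw.hasDerivAt.mul hw''.hasDerivAt).sub
    ((hw'.hasDerivAt.pow 2).const_mul (1 / 2 : ℝ))).add (ha.hasDerivAt.mul (hw.hasDerivAt.pow 2))
  convert h using 1
  simp only [Nat.cast_ofNat]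
  ring

/-- The third-order equation of maximal symmetry `w''' + 2a(t)w' + a'(t)w = 0`
has the first integral `w w'' − (1/2)(w')² + a(t)w²`. -/
theorem third_order_first_integral
    (a : ℝ → ℝ) (ha : Differentiable ℝ a)
    (w : ℝ → ℝ) (hw : Differentiable ℝ w)
    (hw' : Differentiable ℝ (deriv w)) (hw'' : Differentiable ℝ (deriv (deriv w)))
    (heq : ∀ t, deriv (deriv (deriv w)) t + 2 * a t * deriv w t + deriv a t * w t = 0) :
    ∀ t, w t * deriv (deriv w) t - (1 / 2) * (deriv w t) ^ 2 + a t * (w t) ^ 2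
        = w 0 * deriv (deriv w) 0 - (1 / 2) * (deriv w 0) ^ 2 + a 0 * (w 0) ^ 2 := by
  have hderiv : ∀ t, HasDerivAt (firstIntegral a w) 0 t := fun t => by
    simpa [heq t] using hasDerivAt_firstIntegral (ha t) (hw t) (hw' t) (hw'' t)
  exact fun t => is_const_of_deriv_eq_zero (fun x => (hderiv x).differentiableAt)
    (fun x => (hderiv x).deriv) t 0
end

section
/- Let a : ℝ → ℝ be continuous, and let u, v : ℝ → ℝ be twice differentiable functions satisfying u''(t) + a(t)·u(t) = 0 and v''(t) + a(t)·v(t) = 0 for all t. Let W = u(0)·v'(0) − u'(0)·v(0), and for real constants A, B, C set w(t) = A·u(t)² + 2B·u(t)·v(t) + C·v(t)². Then for all t, w(t)·w''(t) − (1/2)·w'(t)² + 2·a(t)·w(t)² = 2·(A·C − B²)·W². -/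
/-!
With `Q(x, y) = Ax² + 2Bxy + Cy²` and its polar form `P = binForm A B C`, we have `w = Q(u, v)`,
`w' = 2 P((u, v), (u', v'))` and, since `u'' = -a u` and `v'' = -a v`, `w'' = 2 Q(u', v') - 2a w`.
So the first integral is `2 (Q(u, v) Q(u', v') - P((u, v), (u', v'))²)`, which by the Lagrange
identity for binary forms is `2 (AC - B²) (u v' - u' v)²`; the Wronskian `u v' - u' v` is constant
since its derivative is `u v'' - u'' v = 0`.
-/

def binForm (A B C x y x' y' : ℝ) : ℝ := A * (x * x') + B * (x * y' + x' * y) + C * (y * y')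

section binForm

variable (A B C : ℝ)

lemma binForm_comm (x y x' y' : ℝ) : binForm A B C x y x' y' = binForm A B C x' y' x y := by
  unfold binForm; ring

lemma binForm_self (x y : ℝ) : binForm A B C x y x y = A * x ^ 2 + 2 * B * x * y + C * y ^ 2 := by
  unfold binForm; ring

lemma binForm_mul_binForm_sub_sq (x y x' y' : ℝ) :
    binForm A B C x y x y * binForm A B C x' y' x' y' - binForm A B C x y x' y' ^ 2
      = (A * C - B ^ 2) * (x * y' - x' * y) ^ 2 := by
  unfold binForm; ring

lemma HasDerivAt.binForm {x y x' y' : ℝ → ℝ} {dx dy dx' dy' t : ℝ}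
    (hx : HasDerivAt x dx t) (hy : HasDerivAt y dy t)
    (hx' : HasDerivAt x' dx' t) (hy' : HasDerivAt y' dy' t) :
    HasDerivAt (fun s => binForm A B C (x s) (y s) (x' s) (y' s))
      (binForm A B C dx dy (x' t) (y' t) + binForm A B C (x t) (y t) dx' dy') t :=
  ((((hx.mul hx').const_mul A).add (((hx.mul hy').add (hx'.mul hy)).const_mul B)).add
    ((hy.mul hy').const_mul C)).congr_deriv (by unfold _root_.binForm; ring)

lemma HasDerivAt.binForm_self {x y : ℝ → ℝ} {dx dy t : ℝ}
    (hx : HasDerivAt x dx t) (hy : HasDerivAt y dy t) :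
    HasDerivAt (fun s => _root_.binForm A B C (x s) (y s) (x s) (y s))
      (2 * _root_.binForm A B C (x t) (y t) dx dy) t :=
  (hx.binForm A B C hy hx hy).congr_deriv (by rw [binForm_comm]; ring)

end binForm

lemma wronskian_eq_of_ode {a u v : ℝ → ℝ}
    (hu : Differentiable ℝ u) (hu' : Differentiable ℝ (deriv u))
    (hv : Differentiable ℝ v) (hv' : Differentiable ℝ (deriv v))
    (hueq : ∀ t, deriv (deriv u) t + a t * u t = 0)
    (hveq : ∀ t, deriv (deriv v) t + a t * v t = 0) (s t : ℝ) :
    u s * deriv v s - deriv u s * v s = u t * deriv v t - deriv u t * v t := by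
  have hderiv : ∀ r, HasDerivAt (fun r => u r * deriv v r - deriv u r * v r) 0 r := by
    intro r
    refine (((hu r).hasDerivAt.mul (hv' r).hasDerivAt).sub
      ((hu' r).hasDerivAt.mul (hv r).hasDerivAt)).congr_deriv ?_
    linear_combination u r * hveq r - v r * hueq r
  exact is_const_of_deriv_eq_zero (fun r => (hderiv r).differentiableAt)
    (fun r => (hderiv r).deriv) s t

lemma deriv_deriv_binForm_self_of_ode {a u v : ℝ → ℝ} (A B C : ℝ)
    (hu : Differentiable ℝ u) (hu' : Differentiable ℝ (deriv u))
    (hv : Differentiable ℝ v) (hv' : Differentiable ℝ (deriv v))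
    (hueq : ∀ t, deriv (deriv u) t + a t * u t = 0)
    (hveq : ∀ t, deriv (deriv v) t + a t * v t = 0) (t : ℝ) :
    deriv (deriv fun s => binForm A B C (u s) (v s) (u s) (v s)) t
      = 2 * binForm A B C (deriv u t) (deriv v t) (deriv u t) (deriv v t)
        - 2 * a t * binForm A B C (u t) (v t) (u t) (v t) := by
  have hw' : deriv (fun s => binForm A B C (u s) (v s) (u s) (v s))
      = fun s => 2 * binForm A B C (u s) (v s) (deriv u s) (deriv v s) :=
    funext fun s => ((hu s).hasDerivAt.binForm_self A B C (hv s).hasDerivAt).deriv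
  have hu'' : deriv (deriv u) t = -a t * u t := by linear_combination hueq t
  have hv'' : deriv (deriv v) t = -a t * v t := by linear_combination hveq t
  rw [hw', (((hu t).hasDerivAt.binForm A B C (hv t).hasDerivAt (hu' t).hasDerivAt
    (hv' t).hasDerivAt).const_mul 2).deriv, hu'', hv'']
  unfold binForm; ring

theorem first_integral_value_general
    (a : ℝ → ℝ)
    (u v : ℝ → ℝ)
    (hu : Differentiable ℝ u) (hu' : Differentiable ℝ (deriv u))
    (hv : Differentiable ℝ v) (hv' : Differentiable ℝ (deriv v))
    (hueq : ∀ t, deriv (deriv u) t + a t * u t = 0)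
    (hveq : ∀ t, deriv (deriv v) t + a t * v t = 0)
    (W : ℝ) (hW : W = u 0 * deriv v 0 - deriv u 0 * v 0)
    (A B C : ℝ) :
    ∀ t, (fun s => A * u s ^ 2 + 2 * B * u s * v s + C * v s ^ 2) t
          * deriv (deriv fun s => A * u s ^ 2 + 2 * B * u s * v s + C * v s ^ 2) t
        - (1 / 2) * (deriv (fun s => A * u s ^ 2 + 2 * B * u s * v s + C * v s ^ 2) t) ^ 2
        + 2 * a t * ((fun s => A * u s ^ 2 + 2 * B * u s * v s + C * v s ^ 2) t) ^ 2
        = 2 * (A * C - B ^ 2) * W ^ 2 := by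
  intro t
  simp only [← binForm_self]
  rw [deriv_deriv_binForm_self_of_ode A B C hu hu' hv hv' hueq hveq,
    ((hu t).hasDerivAt.binForm_self A B C (hv t).hasDerivAt).deriv,
    hW, wronskian_eq_of_ode hu hu' hv hv' hueq hveq 0 t]
  linear_combination 2 * binForm_mul_binForm_sub_sq A B C (u t) (v t) (deriv u t) (deriv v t)

/-- For `u, v` solving `z'' + a(t)z = 0` with Wronskian `W` and
`w = Au² + 2Buv + Cv²`, the first integral of the integrated third-order
equation evaluates to `2(AC − B²)W²`. -/
theorem first_integral_value
    (a : ℝ → ℝ) (ha : Continuous a)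
    (u v : ℝ → ℝ)
    (hu : Differentiable ℝ u) (hu' : Differentiable ℝ (deriv u))
    (hv : Differentiable ℝ v) (hv' : Differentiable ℝ (deriv v))
    (hueq : ∀ t, deriv (deriv u) t + a t * u t = 0)
    (hveq : ∀ t, deriv (deriv v) t + a t * v t = 0)
    (W : ℝ) (hW : W = u 0 * deriv v 0 - deriv u 0 * v 0)
    (A B C : ℝ) :
    ∀ t, (fun s => A * u s ^ 2 + 2 * B * u s * v s + C * v s ^ 2) t
          * deriv (deriv fun s => A * u s ^ 2 + 2 * B * u s * v s + C * v s ^ 2) t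
        - (1 / 2) * (deriv (fun s => A * u s ^ 2 + 2 * B * u s * v s + C * v s ^ 2) t) ^ 2
        + 2 * a t * ((fun s => A * u s ^ 2 + 2 * B * u s * v s + C * v s ^ 2) t) ^ 2
        = 2 * (A * C - B ^ 2) * W ^ 2 :=
  first_integral_value_general a u v hu hu' hv hv' hueq hveq W hW A B C
end

section
/- Let F : ℝ → ℝ be continuous and let u, v : ℝ → ℝ be twice differentiable functions satisfying u''(t) + F(t)²·u(t) = 0 and v''(t) + F(t)²·v(t) = 0 for all t, with constant Wronskian W = u(t)·v'(t) − u'(t)·v(t). Define vector fields on ℝ² (coordinates (t, x)) by Γ₁(t, x) = (u(t)², u(t)·u'(t)·x), Γ₂(t, x) = (u(t)·v(t), (1/2)(u'(t)·v(t) + u(t)·v'(t))·x), Γ₃(t, x) = (v(t)², v(t)·v'(t)·x). Then [Γ₁, Γ₂] = W·Γ₁, [Γ₁, Γ₃] = 2W·Γ₂, and [Γ₂, Γ₃] = W·Γ₃ at every point of ℝ². -/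
/-!
Each `Γᵢ` is the lift `Γ_a = a ∂ₜ + ½ a' x ∂ₓ` (here `liftVF a`) of a field `a ∂ₜ` on the line,
with `a ∈ {u², uv, v²}`, and a direct computation gives `[Γ_a, Γ_b] = Γ_{W(a, b)}` for the
Wronskian `W(a, b) = a b' - a' b`: lifting respects brackets. The product rule
`W(ab, cd) = bd·W(a, c) + ac·W(b, d)` then reduces the three brackets to
`W(u², uv) = u²·W`, `W(u², v²) = 2uv·W` and `W(uv, v²) = v²·W`.
-/

/-- The Lie bracket of two vector fields on `ℝ²`:
`[V, W](p) = DW(p)·V(p) − DV(p)·W(p)`. -/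
noncomputable def lieBracketVF (V W : ℝ × ℝ → ℝ × ℝ) (p : ℝ × ℝ) : ℝ × ℝ :=
  fderiv ℝ W p (V p) - fderiv ℝ V p (W p)

noncomputable def liftVF (a : ℝ → ℝ) (p : ℝ × ℝ) : ℝ × ℝ :=
  (a p.1, 1 / 2 * deriv a p.1 * p.2)

noncomputable def wronskian (a b : ℝ → ℝ) (t : ℝ) : ℝ :=
  a t * deriv b t - deriv a t * b t

section

variable {a b c d : ℝ → ℝ} {t : ℝ}

theorem wronskian_self : wronskian a a t = 0 := by
  unfold wronskian; ring

theorem wronskian_mul_mul (ha : DifferentiableAt ℝ a t) (hb : DifferentiableAt ℝ b t)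
    (hc : DifferentiableAt ℝ c t) (hd : DifferentiableAt ℝ d t) :
    wronskian (fun t => a t * b t) (fun t => c t * d t) t
      = b t * d t * wronskian a c t + a t * c t * wronskian b d t := by
  simp only [wronskian, deriv_fun_mul ha hb, deriv_fun_mul hc hd]
  ring

theorem hasDerivAt_wronskian (ha : DifferentiableAt ℝ a t) (ha' : DifferentiableAt ℝ (deriv a) t)
    (hb : DifferentiableAt ℝ b t) (hb' : DifferentiableAt ℝ (deriv b) t) :
    HasDerivAt (wronskian a b) (a t * deriv (deriv b) t - deriv (deriv a) t * b t) t :=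
  ((ha.hasDerivAt.mul hb'.hasDerivAt).sub (ha'.hasDerivAt.mul hb.hasDerivAt)).congr_deriv
    (by ring)

theorem differentiable_deriv_mul (ha : Differentiable ℝ a) (ha' : Differentiable ℝ (deriv a))
    (hb : Differentiable ℝ b) (hb' : Differentiable ℝ (deriv b)) :
    Differentiable ℝ (deriv fun t => a t * b t) := by
  rw [show (deriv fun t => a t * b t) = fun t => deriv a t * b t + a t * deriv b t from
    funext fun t => deriv_fun_mul (ha t) (hb t)]
  exact (ha'.mul hb).add (ha.mul hb')

theorem liftVF_mul (ha : Differentiable ℝ a) (hb : Differentiable ℝ b) :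
    liftVF (fun t => a t * b t)
      = fun p => (a p.1 * b p.1, 1 / 2 * (deriv a p.1 * b p.1 + a p.1 * deriv b p.1) * p.2) := by
  funext p
  simp only [liftVF, deriv_fun_mul (ha p.1) (hb p.1)]

theorem liftVF_const_mul (k : ℝ) : liftVF (fun t => k * a t) = k • liftVF a := by
  funext p
  simp only [liftVF, deriv_const_mul_field', Pi.smul_apply, Prod.smul_mk, smul_eq_mul]
  ext <;> ring

theorem fderiv_liftVF_apply {p : ℝ × ℝ} (ha : DifferentiableAt ℝ a p.1)
    (ha' : DifferentiableAt ℝ (deriv a) p.1) (w : ℝ × ℝ) :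
    fderiv ℝ (liftVF a) p w
      = (deriv a p.1 * w.1, 1 / 2 * (deriv (deriv a) p.1 * w.1 * p.2 + deriv a p.1 * w.2)) := by
  have hfst : HasFDerivAt (fun q : ℝ × ℝ => a q.1)
      (deriv a p.1 • ContinuousLinearMap.fst ℝ ℝ ℝ) p :=
    ha.hasDerivAt.comp_hasFDerivAt p hasFDerivAt_fst
  have hsnd : HasFDerivAt (fun q : ℝ × ℝ => 1 / 2 * deriv a q.1 * q.2)
      ((1 / 2 * deriv a p.1) • ContinuousLinearMap.snd ℝ ℝ ℝ
        + p.2 • (1 / 2 * deriv (deriv a) p.1) • ContinuousLinearMap.fst ℝ ℝ ℝ) p :=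
    ((ha'.hasDerivAt.const_mul (1 / 2)).comp_hasFDerivAt p hasFDerivAt_fst).mul hasFDerivAt_snd
  rw [show liftVF a = fun q => (a q.1, 1 / 2 * deriv a q.1 * q.2) from rfl,
    (hfst.prodMk hsnd).fderiv]
  simp only [ContinuousLinearMap.prod_apply, add_apply, smul_apply, smul_eq_mul,
    ContinuousLinearMap.coe_fst', ContinuousLinearMap.coe_snd']
  ext <;> ring

theorem lieBracketVF_liftVF (ha : Differentiable ℝ a) (ha' : Differentiable ℝ (deriv a))
    (hb : Differentiable ℝ b) (hb' : Differentiable ℝ (deriv b)) :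
    lieBracketVF (liftVF a) (liftVF b) = liftVF (wronskian a b) := by
  funext p
  rw [lieBracketVF, fderiv_liftVF_apply (ha p.1) (ha' p.1),
    fderiv_liftVF_apply (hb p.1) (hb' p.1), liftVF, liftVF, liftVF,
    (hasDerivAt_wronskian (ha p.1) (ha' p.1) (hb p.1) (hb' p.1)).deriv]
  ext <;> simp only [Prod.fst_sub, Prod.snd_sub, wronskian] <;> ring

end

theorem time_dependent_ermakov_pinney_symmetry_algebra_general
    (u v : ℝ → ℝ)
    (hu : Differentiable ℝ u) (hu' : Differentiable ℝ (deriv u))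
    (hv : Differentiable ℝ v) (hv' : Differentiable ℝ (deriv v))
    (W : ℝ) (hW : ∀ t, u t * deriv v t - deriv u t * v t = W)
    (Γ₁ Γ₂ Γ₃ : ℝ × ℝ → ℝ × ℝ)
    (hΓ₁ : Γ₁ = fun p => ((u p.1) ^ 2, u p.1 * deriv u p.1 * p.2))
    (hΓ₂ : Γ₂ = fun p => (u p.1 * v p.1,
        (1 / 2) * (deriv u p.1 * v p.1 + u p.1 * deriv v p.1) * p.2))
    (hΓ₃ : Γ₃ = fun p => ((v p.1) ^ 2, v p.1 * deriv v p.1 * p.2)) :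
    (∀ p : ℝ × ℝ, lieBracketVF Γ₁ Γ₂ p = W • Γ₁ p) ∧
    (∀ p : ℝ × ℝ, lieBracketVF Γ₁ Γ₃ p = (2 * W) • Γ₂ p) ∧
    (∀ p : ℝ × ℝ, lieBracketVF Γ₂ Γ₃ p = W • Γ₃ p) := by
  replace hΓ₁ : Γ₁ = liftVF fun t => u t * u t := by
    rw [hΓ₁, liftVF_mul hu hu]; ext <;> simp only <;> ring
  replace hΓ₂ : Γ₂ = liftVF fun t => u t * v t := by rw [hΓ₂, liftVF_mul hu hv]
  replace hΓ₃ : Γ₃ = liftVF fun t => v t * v t := by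
    rw [hΓ₃, liftVF_mul hv hv]; ext <;> simp only <;> ring
  have h₁₂ : wronskian (fun t => u t * u t) (fun t => u t * v t) = fun t => W * (u t * u t) := by
    funext t
    rw [wronskian_mul_mul (hu t) (hu t) (hu t) (hv t), wronskian_self, wronskian, hW]
    ring
  have h₁₃ :
      wronskian (fun t => u t * u t) (fun t => v t * v t) = fun t => 2 * W * (u t * v t) := by
    funext t
    rw [wronskian_mul_mul (hu t) (hu t) (hv t) (hv t), wronskian, hW]
    ring
  have h₂₃ : wronskian (fun t => u t * v t) (fun t => v t * v t) = fun t => W * (v t * v t) := by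
    funext t
    rw [wronskian_mul_mul (hu t) (hv t) (hv t) (hv t), wronskian_self, wronskian, hW]
    ring
  have huu := differentiable_deriv_mul hu hu' hu hu'
  have huv := differentiable_deriv_mul hu hu' hv hv'
  have hvv := differentiable_deriv_mul hv hv' hv hv'
  subst hΓ₁ hΓ₂ hΓ₃
  rw [lieBracketVF_liftVF (hu.fun_mul hu) huu (hu.fun_mul hv) huv,
    lieBracketVF_liftVF (hu.fun_mul hu) huu (hv.fun_mul hv) hvv,
    lieBracketVF_liftVF (hu.fun_mul hv) huv (hv.fun_mul hv) hvv,
    h₁₂, h₁₃, h₂₃, liftVF_const_mul, liftVF_const_mul, liftVF_const_mul]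
  exact ⟨fun _ => rfl, fun _ => rfl, fun _ => rfl⟩

/-- For the Ermakov–Pinney equation with time-dependent frequency, the symmetries
`Γ₁ = u²∂ₜ + uu'x∂ₓ`, `Γ₂ = uv∂ₜ + (1/2)(u'v + uv')x∂ₓ`, `Γ₃ = v²∂ₜ + vv'x∂ₓ`
satisfy `[Γ₁,Γ₂] = WΓ₁`, `[Γ₁,Γ₃] = 2WΓ₂`, `[Γ₂,Γ₃] = WΓ₃`, where `W` is the
(constant) Wronskian of `u` and `v`. -/
theorem time_dependent_ermakov_pinney_symmetry_algebra
    (F : ℝ → ℝ) (hF : Continuous F)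
    (u v : ℝ → ℝ)
    (hu : Differentiable ℝ u) (hu' : Differentiable ℝ (deriv u))
    (hv : Differentiable ℝ v) (hv' : Differentiable ℝ (deriv v))
    (hueq : ∀ t, deriv (deriv u) t + (F t) ^ 2 * u t = 0)
    (hveq : ∀ t, deriv (deriv v) t + (F t) ^ 2 * v t = 0)
    (W : ℝ) (hW : ∀ t, u t * deriv v t - deriv u t * v t = W)
    (Γ₁ Γ₂ Γ₃ : ℝ × ℝ → ℝ × ℝ)
    (hΓ₁ : Γ₁ = fun p => ((u p.1) ^ 2, u p.1 * deriv u p.1 * p.2))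
    (hΓ₂ : Γ₂ = fun p => (u p.1 * v p.1,
        (1 / 2) * (deriv u p.1 * v p.1 + u p.1 * deriv v p.1) * p.2))
    (hΓ₃ : Γ₃ = fun p => ((v p.1) ^ 2, v p.1 * deriv v p.1 * p.2)) :
    (∀ p : ℝ × ℝ, lieBracketVF Γ₁ Γ₂ p = W • Γ₁ p) ∧
    (∀ p : ℝ × ℝ, lieBracketVF Γ₁ Γ₃ p = (2 * W) • Γ₂ p) ∧
    (∀ p : ℝ × ℝ, lieBracketVF Γ₂ Γ₃ p = W • Γ₃ p) :=
  time_dependent_ermakov_pinney_symmetry_algebra_general u v hu hu' hv hv' W hW Γ₁ Γ₂ Γ₃ hΓ₁ hΓ₂ hΓ₃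
end

section
/- Let G : ℝ → ℝ be twice differentiable with G(t) > 0 and G'(t) > 0 for all t, and suppose G' is differentiable. Define g : ℝ × ℝ → ℝ by g(t, x) = x·G'(t)^{1/2}/G(t)^{3/4}. Then for all (t, x), (4·G(t)/G'(t))·(∂g/∂t)(t, x) + x·(3 − 2·G(t)·G''(t)/G'(t)²)·(∂g/∂x)(t, x) = 0. -/
/-- The characteristic `g(t,x) = x (G')^{1/2} / G^{3/4}` is annihilated by the
symmetry `Γₛ = (4G/G')∂ₜ + x(3 − 2GG''/(G')²)∂ₓ`. -/
theorem characteristic_annihilated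
    (G : ℝ → ℝ) (hG : Differentiable ℝ G) (hG' : Differentiable ℝ (deriv G))
    (hGpos : ∀ t, G t > 0) (hG'pos : ∀ t, deriv G t > 0)
    (g : ℝ → ℝ → ℝ)
    (hg : g = fun t x => x * Real.sqrt (deriv G t) / (G t) ^ ((3 : ℝ) / 4)) :
    ∀ t x : ℝ,
      (4 * G t / deriv G t) * deriv (fun s => g s x) t
        + x * (3 - 2 * G t * deriv (deriv G) t / (deriv G t) ^ 2)
          * deriv (fun y => g t y) x = 0 := by
  intro t x
  have ha : G t > 0 := hGpos t
  have hb : deriv G t > 0 := hG'pos t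
  set a := G t with ha'
  set b := deriv G t with hb'
  set c := deriv (deriv G) t with hc'
  have hS : Real.sqrt b > 0 := Real.sqrt_pos.2 hb
  have hP : (a : ℝ) ^ ((3 : ℝ) / 4) > 0 := Real.rpow_pos_of_pos ha _
  have h1 : HasDerivAt (fun s => Real.sqrt (deriv G s)) (1 / (2 * Real.sqrt b) * c) t :=
    (Real.hasDerivAt_sqrt (ne_of_gt hb)).comp t (hG'.differentiableAt.hasDerivAt)
  have h2 : HasDerivAt (fun s => (G s) ^ ((3 : ℝ) / 4))
      (((3 : ℝ) / 4) * a ^ ((3 : ℝ) / 4 - 1) * b) t :=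
    (Real.hasDerivAt_rpow_const (Or.inl (ne_of_gt ha))).comp t
      (hG.differentiableAt.hasDerivAt)
  have h3 : HasDerivAt (fun s => Real.sqrt (deriv G s) / (G s) ^ ((3 : ℝ) / 4))
      ((1 / (2 * Real.sqrt b) * c * a ^ ((3 : ℝ) / 4)
        - Real.sqrt b * (((3 : ℝ) / 4) * a ^ ((3 : ℝ) / 4 - 1) * b))
        / (a ^ ((3 : ℝ) / 4)) ^ 2) t := h1.div h2 (ne_of_gt hP)
  have h4 : deriv (fun s => g s x) t =
      x * ((1 / (2 * Real.sqrt b) * c * a ^ ((3 : ℝ) / 4)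
        - Real.sqrt b * (((3 : ℝ) / 4) * a ^ ((3 : ℝ) / 4 - 1) * b))
        / (a ^ ((3 : ℝ) / 4)) ^ 2) := by
    have : (fun s => g s x) = (fun s => x * (Real.sqrt (deriv G s) / (G s) ^ ((3 : ℝ) / 4))) := by
      funext s; rw [hg]; ring
    rw [this]
    exact (h3.const_mul x).deriv
  have h5 : deriv (fun y => g t y) x = Real.sqrt b / a ^ ((3 : ℝ) / 4) := by
    have : (fun y => g t y) = fun y => (Real.sqrt b / a ^ ((3 : ℝ) / 4)) * y := by
      funext y; rw [hg]; ring
    rw [this, deriv_const_mul_field, deriv_id'']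
    ring
  rw [h4, h5]
  have hSb : Real.sqrt b ^ 2 = b := Real.sq_sqrt hb.le
  have hPa : a ^ ((3 : ℝ) / 4 - 1) = a ^ ((3 : ℝ) / 4) / a := by
    rw [Real.rpow_sub ha, Real.rpow_one]
  rw [hPa]
  set S := Real.sqrt b with hSdef
  rw [show b = S ^ 2 from hSb.symm]
  have hS0 : S ≠ 0 := ne_of_gt hS
  have ha0 : a ≠ 0 := ne_of_gt ha
  have hP0 : a ^ ((3 : ℝ) / 4) ≠ 0 := ne_of_gt hP
  field_simp
  ring
end

section
/- Let C₀ and M be real constants with C₀ ≠ 0. Let G : ℝ → ℝ be three times differentiable with G(t) > 0 and G'(t) > 0 for all t. Define a(t) = 4·C₀·G(t)/G'(t) (assumed nonvanishing and twice differentiable) and Φ(t) = M/a(t)² − (1/2)·(a''(t)/a(t) − (1/2)·(a'(t)/a(t))²). Let x : ℝ → ℝ be twice differentiable with x(t) > 0 for all t, satisfying x''(t) + Φ(t)·x(t) = G(t)/x(t)³ for all t. Define T(t) = (1/4)·log G(t), and let X : ℝ → ℝ be a twice differentiable function such that X(T(t)) = x(t)·G'(t)^{1/2}/G(t)^{3/4}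 for all t. Then for every t, X''(T(t)) + 2·X'(T(t)) + (1 + M/C₀²)·X(T(t)) = 16/X(T(t))³. -/
/-!
Change time by the Sundman transformation `dT = (C₀ / a) dt`, which integrates to
`T = (1/4) log G` because `a G' / G = 4 C₀`, and write `X(T) = ρ x` with `ρ = √G' / G^{3/4}`;
this weight solves `2 a ρ' = -(2 C₀ + a') ρ`. For any such weight,
`X'' + 2 X' + (1 + M / C₀²) X = (ρ a² / C₀²) (x'' + Φ x)`: the choice of `Φ` is exactly what
cancels the first-order and `a''` terms. The Ermakov–Pinney equation turns the right-hand side into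
`ρ a² G / (C₀² x³)`, which is `16 / X³` because `ρ⁴ a² G = 16 C₀²`.
-/

open Real

theorem deriv_eq_div_of_comp_eq {X T F : ℝ → ℝ} {t T' F' : ℝ}
    (hX : DifferentiableAt ℝ X (T t)) (hT : HasDerivAt T T' t) (hT' : T' ≠ 0)
    (hF : HasDerivAt F F' t) (hXT : ∀ s, X (T s) = F s) :
    deriv X (T t) = F' / T' := by
  have hcomp : HasDerivAt (fun s => X (T s)) (deriv X (T t) * T') t :=
    hX.hasDerivAt.comp t hT
  rw [funext hXT] at hcomp
  exact eq_div_of_mul_eq hT' (hcomp.unique hF)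

noncomputable def ermakovPotential (M : ℝ) (a : ℝ → ℝ) (t : ℝ) : ℝ :=
  M / a t ^ 2 - (1 / 2) * (deriv (deriv a) t / a t - (1 / 2) * (deriv a t / a t) ^ 2)

section Liouville

variable {c : ℝ} {a x ρ T X : ℝ → ℝ}

theorem deriv_comp_eq_of_sundman (hc : c ≠ 0) (ha0 : ∀ s, a s ≠ 0)
    (hρ : ∀ s, HasDerivAt ρ (-(2 * c + deriv a s) / (2 * a s) * ρ s) s)
    (hx : Differentiable ℝ x) (hT : ∀ s, HasDerivAt T (c / a s) s)
    (hX : Differentiable ℝ X) (hXx : ∀ s, X (T s) = x s * ρ s) (s : ℝ) :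
    deriv X (T s) = ρ s * (a s * deriv x s - (c + deriv a s / 2) * x s) / c := by
  have hF := (hx s).hasDerivAt.mul (hρ s)
  rw [deriv_eq_div_of_comp_eq (hX _) (hT s) (div_ne_zero hc (ha0 s)) hF hXx]
  field_simp [ha0 s]
  ring

theorem deriv_deriv_comp_eq_of_sundman (hc : c ≠ 0) (ha0 : ∀ s, a s ≠ 0)
    (ha : Differentiable ℝ a) (ha' : Differentiable ℝ (deriv a))
    (hρ : ∀ s, HasDerivAt ρ (-(2 * c + deriv a s) / (2 * a s) * ρ s) s)
    (hx : Differentiable ℝ x) (hx' : Differentiable ℝ (deriv x))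
    (hT : ∀ s, HasDerivAt T (c / a s) s)
    (hX : Differentiable ℝ X) (hX' : Differentiable ℝ (deriv X))
    (hXx : ∀ s, X (T s) = x s * ρ s) (t : ℝ) :
    deriv (deriv X) (T t) = a t / c ^ 2 *
      (-(2 * c + deriv a t) / (2 * a t) * ρ t * (a t * deriv x t - (c + deriv a t / 2) * x t)
        + ρ t * (deriv a t * deriv x t + a t * deriv (deriv x) t
          - (deriv (deriv a) t / 2 * x t + (c + deriv a t / 2) * deriv x t))) := by
  have hv : HasDerivAt (fun s => a s * deriv x s - (c + deriv a s / 2) * x s) _ t :=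
    ((ha t).hasDerivAt.mul (hx' t).hasDerivAt).sub
    ((((ha' t).hasDerivAt.div_const 2).const_add c).mul (hx t).hasDerivAt)
  have hF := ((hρ t).mul hv).div_const c
  rw [deriv_eq_div_of_comp_eq (hX' _) (hT t) (div_ne_zero hc (ha0 t)) hF
    (deriv_comp_eq_of_sundman hc ha0 hρ hx hT hX hXx)]
  field_simp [ha0 t]

theorem liouville_transform (M : ℝ) (hc : c ≠ 0) (ha0 : ∀ s, a s ≠ 0)
    (ha : Differentiable ℝ a) (ha' : Differentiable ℝ (deriv a))
    (hρ : ∀ s, HasDerivAt ρ (-(2 * c + deriv a s) / (2 * a s) * ρ s) s)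
    (hx : Differentiable ℝ x) (hx' : Differentiable ℝ (deriv x))
    (hT : ∀ s, HasDerivAt T (c / a s) s)
    (hX : Differentiable ℝ X) (hX' : Differentiable ℝ (deriv X))
    (hXx : ∀ s, X (T s) = x s * ρ s) (t : ℝ) :
    deriv (deriv X) (T t) + 2 * deriv X (T t) + (1 + M / c ^ 2) * X (T t)
      = ρ t * a t ^ 2 / c ^ 2 * (deriv (deriv x) t + ermakovPotential M a t * x t) := by
  rw [deriv_deriv_comp_eq_of_sundman hc ha0 ha ha' hρ hx hx' hT hX hX' hXx,
    deriv_comp_eq_of_sundman hc ha0 hρ hx hT hX hXx, hXx, ermakovPotential]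
  field_simp [ha0 t]
  ring

end Liouville

theorem hasDerivAt_sqrt_deriv_div_rpow {G : ℝ → ℝ} {t : ℝ} (hG : DifferentiableAt ℝ G t)
    (hG' : DifferentiableAt ℝ (deriv G) t) (hGpos : 0 < G t) (hG'pos : 0 < deriv G t) :
    HasDerivAt (fun s => √(deriv G s) / G s ^ (3 / 4 : ℝ))
      ((deriv (deriv G) t / (2 * deriv G t) - 3 * deriv G t / (4 * G t))
        * (√(deriv G t) / G t ^ (3 / 4 : ℝ))) t := by
  refine ((hG'.hasDerivAt.sqrt hG'pos.ne').div (hG.hasDerivAt.rpow_const (Or.inl hGpos.ne'))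
    (rpow_pos_of_pos hGpos _).ne').congr_deriv ?_
  have hsq : √(deriv G t) ^ 2 = deriv G t := sq_sqrt hG'pos.le
  rw [rpow_sub_one hGpos.ne']
  field_simp [(sqrt_pos.2 hG'pos).ne', (rpow_pos_of_pos hGpos (3 / 4 : ℝ)).ne']
  rw [hsq]
  ring

theorem hasDerivAt_weight_of_eq_div {C₀ : ℝ} {G a : ℝ → ℝ} (hC₀ : C₀ ≠ 0)
    (hG : Differentiable ℝ G) (hG' : Differentiable ℝ (deriv G))
    (hGpos : ∀ t, 0 < G t) (hG'pos : ∀ t, 0 < deriv G t)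
    (ha : ∀ t, a t = 4 * C₀ * G t / deriv G t) (t : ℝ) :
    HasDerivAt (fun s => √(deriv G s) / G s ^ (3 / 4 : ℝ))
      (-(2 * C₀ + deriv a t) / (2 * a t) * (√(deriv G t) / G t ^ (3 / 4 : ℝ))) t := by
  have hda : HasDerivAt a ((4 * C₀ * deriv G t * deriv G t
      - 4 * C₀ * G t * deriv (deriv G) t) / deriv G t ^ 2) t := by
    rw [funext ha]
    exact ((hG t).hasDerivAt.const_mul _).div (hG' t).hasDerivAt (hG'pos t).ne'
  refine (hasDerivAt_sqrt_deriv_div_rpow (hG t) (hG' t) (hGpos t) (hG'pos t)).congr_deriv ?_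
  rw [hda.deriv, ha]
  field_simp [(hGpos t).ne', (hG'pos t).ne']
  ring

theorem sqrt_div_rpow_pow_four_mul {c g g' : ℝ} (hg : 0 < g) (hg' : 0 < g') :
    (√g' / g ^ (3 / 4 : ℝ)) ^ 4 * (4 * c * g / g') ^ 2 * g = 16 * c ^ 2 := by
  have hsq : √g' ^ 4 = g' ^ 2 := by rw [show 4 = 2 * 2 by rfl, pow_mul, sq_sqrt hg'.le]
  have hrpow : (g ^ (3 / 4 : ℝ)) ^ 4 = g ^ 3 := by
    rw [← rpow_natCast, ← rpow_mul hg.le]; norm_num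
  rw [div_pow, hsq, hrpow]
  field_simp
  ring

theorem reduction_to_autonomous_general
    (C₀ M : ℝ) (hC₀ : C₀ ≠ 0)
    (G : ℝ → ℝ) (hG : Differentiable ℝ G) (hG' : Differentiable ℝ (deriv G))
    (hGpos : ∀ t, G t > 0) (hG'pos : ∀ t, deriv G t > 0)
    (a : ℝ → ℝ) (ha_def : ∀ t, a t = 4 * C₀ * G t / deriv G t)
    (hane : ∀ t, a t ≠ 0)
    (ha : Differentiable ℝ a) (ha' : Differentiable ℝ (deriv a))
    (Φ : ℝ → ℝ)
    (hΦ_def : ∀ t, Φ t = M / (a t) ^ 2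
        - (1 / 2) * (deriv (deriv a) t / a t - (1 / 2) * (deriv a t / a t) ^ 2))
    (x : ℝ → ℝ) (hx : Differentiable ℝ x) (hx' : Differentiable ℝ (deriv x))
    (hxeq : ∀ t, deriv (deriv x) t + Φ t * x t = G t / (x t) ^ 3)
    (T : ℝ → ℝ) (hT : ∀ t, T t = (1 / 4) * Real.log (G t))
    (X : ℝ → ℝ) (hX : Differentiable ℝ X) (hX' : Differentiable ℝ (deriv X))
    (hXx : ∀ t, X (T t) = x t * Real.sqrt (deriv G t) / (G t) ^ ((3 : ℝ) / 4)) :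
    ∀ t, deriv (deriv X) (T t) + 2 * deriv X (T t)
        + (1 + M / C₀ ^ 2) * X (T t) = 16 / (X (T t)) ^ 3 := by
  intro t
  set ρ := fun s => √(deriv G s) / G s ^ (3 / 4 : ℝ)
  have hTa : ∀ s, HasDerivAt T (C₀ / a s) s := fun s => by
    rw [funext hT]
    refine (((hG s).hasDerivAt.log (hGpos s).ne').const_mul (1 / 4)).congr_deriv ?_
    rw [ha_def]
    field_simp [(hG'pos s).ne', (hGpos s).ne']
  have hρ := hasDerivAt_weight_of_eq_div hC₀ hG hG' hGpos hG'pos ha_def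
  have hXρ : ∀ s, X (T s) = x s * ρ s := fun s => by rw [hXx, mul_div_assoc]
  have hρ4 : ρ t ^ 4 * a t ^ 2 * G t = 16 * C₀ ^ 2 := by
    rw [ha_def]
    exact sqrt_div_rpow_pow_four_mul (hGpos t) (hG'pos t)
  have hρ0 : ρ t ≠ 0 := div_ne_zero (sqrt_pos.2 (hG'pos t)).ne' (rpow_pos_of_pos (hGpos t) _).ne'
  have hΦ : ermakovPotential M a t = Φ t := (hΦ_def t).symm
  rw [liouville_transform M hC₀ hane ha ha' hρ hx hx' hTa hX hX' hXρ, hΦ, hxeq, hXρ]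
  calc ρ t * a t ^ 2 / C₀ ^ 2 * (G t / x t ^ 3)
      = ρ t ^ 4 * a t ^ 2 * G t / C₀ ^ 2 / ρ t ^ 3 / x t ^ 3 := by field_simp
    _ = 16 / (x t * ρ t) ^ 3 := by rw [hρ4]; field_simp

/-- Under the relation between `Φ` and `G` through `a = 4C₀G/G'`, the change of
variables `T = (1/4)log G`, `X = x (G')^{1/2}/G^{3/4}` renders the generalized
Ermakov–Pinney equation autonomous: `X'' + 2X' + (1 + M/C₀²)X = 16/X³`. -/
theorem reduction_to_autonomous
    (C₀ M : ℝ) (hC₀ : C₀ ≠ 0)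
    (G : ℝ → ℝ) (hG : Differentiable ℝ G) (hG' : Differentiable ℝ (deriv G))
    (hG'' : Differentiable ℝ (deriv (deriv G)))
    (hGpos : ∀ t, G t > 0) (hG'pos : ∀ t, deriv G t > 0)
    (a : ℝ → ℝ) (ha_def : ∀ t, a t = 4 * C₀ * G t / deriv G t)
    (hane : ∀ t, a t ≠ 0)
    (ha : Differentiable ℝ a) (ha' : Differentiable ℝ (deriv a))
    (Φ : ℝ → ℝ)
    (hΦ_def : ∀ t, Φ t = M / (a t) ^ 2
        - (1 / 2) * (deriv (deriv a) t / a t - (1 / 2) * (deriv a t / a t) ^ 2))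
    (x : ℝ → ℝ) (hx : Differentiable ℝ x) (hx' : Differentiable ℝ (deriv x))
    (hxpos : ∀ t, x t > 0)
    (hxeq : ∀ t, deriv (deriv x) t + Φ t * x t = G t / (x t) ^ 3)
    (T : ℝ → ℝ) (hT : ∀ t, T t = (1 / 4) * Real.log (G t))
    (X : ℝ → ℝ) (hX : Differentiable ℝ X) (hX' : Differentiable ℝ (deriv X))
    (hXx : ∀ t, X (T t) = x t * Real.sqrt (deriv G t) / (G t) ^ ((3 : ℝ) / 4)) :
    ∀ t, deriv (deriv X) (T t) + 2 * deriv X (T t)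
        + (1 + M / C₀ ^ 2) * X (T t) = 16 / (X (T t)) ^ 3 :=
  reduction_to_autonomous_general C₀ M hC₀ G hG hG' hGpos hG'pos a ha_def hane ha ha' Φ hΦ_def x hx
    hx' hxeq T hT X hX hX' hXx
end
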